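/- Let A = ∑ᵢ₌₁ⁿ aᵢ O^{(i)} ⊗ I^{[n]∖{i}} be a Hermitian operator on (ℂ⁴)^{⊗n}, where each aᵢ ≥ 0, each O^{(i)} ∈ H₄ is traceless with ‖O^{(i)}‖_F = 1 (here with normalization tr((O^{(i)})²)/4 = 1), and O^{(i)} acts on the i-th tensor factor. If the normalized Frobenius distance of A² to I is at most ε, then there exists ℓ ∈ [n] such that A is O(ε)-close in normalized Frobenius norm to O^{(ℓ)} ⊗ I^{[n]∖{ℓ}}. -/

import Mathlib

open Matrix

noncomputable def frobNorm {m k : Type*} [Fintype m] [Fintype k] (M : Matrix m k ℂ) : ℝ :=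
  Real.sqrt (∑ i, ∑ j, Complex.normSq (M i j))

/-- The operator `O ⊗ I^{[n]∖{i}}` acting on the `i`-th register of `(ℂ⁴)^{⊗n}`. -/
noncomputable def embedAt {n : ℕ} (i : Fin n) (O : Matrix (Fin 4) (Fin 4) ℂ) :
    Matrix (Fin n → Fin 4) (Fin n → Fin 4) ℂ :=
  fun x y => if ∀ j, j ≠ i → x j = y j then O (x i) (y i) else 0

/-!
The operators `E_s = ⊗_{k ∈ s} O_k ⊗ I` (`s ⊆ [n]`) are orthonormal for the normalized
Hilbert–Schmidt inner product, because every `O_k` is traceless with normalized norm `1`.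
Since `E_i E_j = E_{i,j}` for `i ≠ j`, the coefficient of `A² - I` on `E_∅ = I` is
`∑ aᵢ² - 1` and that on `E_{i,j}` is `2 aᵢ aⱼ`, while the diagonal terms `aᵢ² E_i²` are
orthogonal to all the `E_{i,j}`. Bessel's inequality therefore gives
`(∑ aᵢ² - 1)² + ∑_{i ≠ j} aᵢ² aⱼ² ≤ ε²`. For `ℓ` maximizing `aₗ` the off-diagonal sum
dominates `(∑ aᵢ²) (∑_{j ≠ ℓ} aⱼ²)`, which forces `aₗ² ≈ 1` and `∑_{j ≠ ℓ} aⱼ² = O(ε²)`;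
by Pythagoras `‖A - E_ℓ‖² = (aₗ - 1)² + ∑_{j ≠ ℓ} aⱼ²`.
-/

theorem Finset.sum_sq_le_sum_sq_sum_fiberwise {α β R : Type*} [DecidableEq β] [Semiring R]
    [PartialOrder R] [IsOrderedRing R] {s : Finset α} {t : Finset β} {g : α → β}
    (hg : ∀ x ∈ s, g x ∈ t) {f : α → R} (hf : ∀ x ∈ s, 0 ≤ f x) :
    ∑ x ∈ s, f x ^ 2 ≤ ∑ y ∈ t, (∑ x ∈ s with g x = y, f x) ^ 2 := by
  rw [← Finset.sum_fiberwise_of_maps_to hg]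
  exact Finset.sum_le_sum fun y _ =>
    Finset.sum_sq_le_sq_sum_of_nonneg fun x hx => hf x (Finset.mem_filter.mp hx).1

section Weights

variable {ι : Type*} [Fintype ι] [DecidableEq ι]

theorem sum_mul_sum_erase_le_sum_offDiag {x : ι → ℝ} (hx : ∀ i, 0 ≤ x i) {ℓ : ι}
    (hℓ : ∀ i, x i ≤ x ℓ) :
    (∑ i, x i) * ∑ j ∈ Finset.univ.erase ℓ, x j ≤ ∑ p ∈ Finset.univ.offDiag, x p.1 * x p.2 := by
  rw [Finset.sum_finset_product' _ Finset.univ (fun i => Finset.univ.erase i)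
    (by simp [Finset.mem_offDiag, ne_comm]) (f := fun i j => x i * x j), Finset.sum_mul]
  refine Finset.sum_le_sum fun i _ => ?_
  rw [← Finset.mul_sum, Finset.sum_erase_eq_sub (Finset.mem_univ _),
    Finset.sum_erase_eq_sub (Finset.mem_univ _)]
  exact mul_le_mul_of_nonneg_left (by linarith [hℓ i]) (hx i)

theorem exists_abs_sub_one_le_sum_erase_le [Nonempty ι] {x : ι → ℝ} (hx : ∀ i, 0 ≤ x i) {ε : ℝ}
    (hε : 0 ≤ ε) (h : (∑ i, x i - 1) ^ 2 + ∑ p ∈ Finset.univ.offDiag, x p.1 * x p.2 ≤ ε ^ 2) :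
    ∃ ℓ, |x ℓ - 1| ≤ 2 * ε ∧ ∑ j ∈ Finset.univ.erase ℓ, x j ≤ 6 * ε ^ 2 := by
  obtain ⟨ℓ, -, hℓ⟩ := Finset.exists_max_image Finset.univ x Finset.univ_nonempty
  have hST := sum_mul_sum_erase_le_sum_offDiag hx (fun i => hℓ i (Finset.mem_univ i))
  have hsplit := Finset.add_sum_erase Finset.univ x (Finset.mem_univ ℓ)
  set S := ∑ i, x i
  set T := ∑ j ∈ Finset.univ.erase ℓ, x j
  have hT : 0 ≤ T := Finset.sum_nonneg fun j _ => hx j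
  have hQ : 0 ≤ ∑ p ∈ Finset.univ.offDiag, x p.1 * x p.2 :=
    Finset.sum_nonneg fun p _ => mul_nonneg (hx _) (hx _)
  obtain ⟨hS₁, hS₂⟩ := abs_le_of_sq_le_sq' (by linarith : (S - 1) ^ 2 ≤ ε ^ 2) hε
  -- For `ε ≤ 1/2` we have `S ≥ 1/2`, so `T ≤ 2 S T ≤ 2 ε²`; otherwise `T ≤ S ≤ 1 + ε ≤ 6 ε²`.
  have hbounds : 1 - x ℓ ≤ 2 * ε ∧ T ≤ 6 * ε ^ 2 := by
    rcases le_or_gt ε (1 / 2) with hε' | hε'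
    · have hT₂ : T ≤ 2 * ε ^ 2 := by nlinarith
      constructor <;> nlinarith
    · constructor <;> nlinarith [hx ℓ]
  exact ⟨ℓ, abs_le.mpr ⟨by linarith, by linarith⟩, hbounds.2⟩

end Weights

theorem abs_sub_one_le_abs_sq_sub_one {a : ℝ} (ha : 0 ≤ a) : |a - 1| ≤ |a ^ 2 - 1| := by
  rw [show a ^ 2 - 1 = (a - 1) * (a + 1) by ring, abs_mul]
  exact le_mul_of_one_le_right (abs_nonneg _) (by rw [abs_of_pos (by linarith)]; linarith)

section Orthonormal

variable {𝕜 E ι : Type*} [RCLike 𝕜] [SeminormedAddCommGroup E] [InnerProductSpace 𝕜 E]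
  {v : ι → E}

theorem Orthonormal.norm_sum_smul_sq (hv : Orthonormal 𝕜 v) (c : ι → 𝕜) (s : Finset ι) :
    ‖∑ i ∈ s, c i • v i‖ ^ 2 = ∑ i ∈ s, ‖c i‖ ^ 2 := by
  rw [@norm_sq_eq_re_inner 𝕜, hv.inner_sum, map_sum]
  refine Finset.sum_congr rfl fun i _ => ?_
  rw [RCLike.conj_mul, ← RCLike.ofReal_pow, RCLike.ofReal_re]

theorem Orthonormal.norm_sum_ofReal_smul_sub_sq [Fintype ι] [DecidableEq ι]
    (hv : Orthonormal 𝕜 v) (a : ι → ℝ) (ℓ : ι) :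
    ‖∑ i, (a i : 𝕜) • v i - v ℓ‖ ^ 2 = (a ℓ - 1) ^ 2 + ∑ j ∈ Finset.univ.erase ℓ, a j ^ 2 := by
  have hsub : ∑ i, (a i : 𝕜) • v i - v ℓ =
      ∑ i, ((a i - if i = ℓ then 1 else 0 : ℝ) : 𝕜) • v i := by
    simp [sub_smul, Finset.sum_sub_distrib, ite_smul]
  rw [hsub, hv.norm_sum_smul_sq, ← Finset.add_sum_erase _ _ (Finset.mem_univ ℓ)]
  congr 1
  · rw [if_pos rfl, RCLike.norm_ofReal, sq_abs]
  · refine Finset.sum_congr rfl fun j hj => ?_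
    rw [if_neg (Finset.ne_of_mem_erase hj), sub_zero, RCLike.norm_ofReal, sq_abs]

end Orthonormal

open scoped ComplexOrder in
theorem Matrix.posSemidef_inv_card_smul_one {m : Type*} [Fintype m] [DecidableEq m] :
    ((Fintype.card m : ℂ)⁻¹ • (1 : Matrix m m ℂ)).PosSemidef :=
  PosSemidef.one.smul (by positivity)

/-- With this weight, Mathlib's matrix inner product `⟪X, Y⟫ = tr (Y * M * Xᴴ)` is the normalized
Hilbert–Schmidt product `tr (Xᴴ * Y) / card m`, whose norm is the normalized Frobenius norm. -/
noncomputable abbrev Matrix.normalizedHSSeminormedAddCommGroup {m : Type*} [Fintype m]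
    [DecidableEq m] : SeminormedAddCommGroup (Matrix m m ℂ) :=
  toMatrixSeminormedAddCommGroup _ posSemidef_inv_card_smul_one

attribute [local instance] Matrix.normalizedHSSeminormedAddCommGroup

noncomputable abbrev Matrix.normalizedHSInnerProductSpace {m : Type*} [Fintype m]
    [DecidableEq m] : InnerProductSpace ℂ (Matrix m m ℂ) :=
  toMatrixInnerProductSpace _ posSemidef_inv_card_smul_one

attribute [local instance] Matrix.normalizedHSInnerProductSpace

namespace Matrix

section HilbertSchmidt

variable {m : Type*} [Fintype m]

theorem re_trace_conjTranspose_mul_self (X : Matrix m m ℂ) :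
    ((Xᴴ * X).trace).re = ∑ i, ∑ j, Complex.normSq (X i j) := by
  simp only [trace, diag_apply, mul_apply, conjTranspose_apply, Complex.re_sum, RCLike.star_def,
    Complex.conj_mul', ← Complex.ofReal_pow, Complex.ofReal_re, Complex.normSq_eq_norm_sq]
  exact Finset.sum_comm

variable [DecidableEq m]

theorem inner_eq_trace_div (X Y : Matrix m m ℂ) :
    inner ℂ X Y = (Xᴴ * Y).trace / Fintype.card m := by
  change (Y * _ * Xᴴ).trace = _
  rw [mul_smul_comm, mul_one, smul_mul_assoc, trace_smul, trace_mul_comm, smul_eq_mul,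
    div_eq_inv_mul]

theorem norm_eq_frobNorm_div (X : Matrix m m ℂ) :
    ‖X‖ = frobNorm X / Real.sqrt (Fintype.card m) := by
  rw [← Real.sqrt_sq (norm_nonneg X), @norm_sq_eq_re_inner ℂ, inner_eq_trace_div, frobNorm,
    ← Real.sqrt_div' _ (Nat.cast_nonneg _), RCLike.re_to_complex, Complex.div_natCast_re,
    re_trace_conjTranspose_mul_self]

theorem inner_mul_self_sum_smul {ι : Type*} (X : Matrix m m ℂ) (a : ι → ℂ)
    (v : ι → Matrix m m ℂ) (s : Finset ι) :
    inner ℂ X ((∑ i ∈ s, a i • v i) * ∑ j ∈ s, a j • v j) =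
      ∑ i ∈ s, ∑ j ∈ s, a i * a j * inner ℂ X (v i * v j) := by
  simp only [Finset.sum_mul_sum, smul_mul_smul_comm, inner_sum, inner_smul_right]

theorem inner_one_mul (X Y : Matrix m m ℂ) : inner ℂ 1 (X * Y) = inner ℂ Xᴴ Y := by
  rw [inner_eq_trace_div, inner_eq_trace_div, conjTranspose_one, one_mul,
    conjTranspose_conjTranspose]

theorem inner_one_one [Nonempty m] : inner ℂ (1 : Matrix m m ℂ) 1 = 1 := by
  rw [inner_eq_trace_div, conjTranspose_one, one_mul, trace_one, div_self (by simp)]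

end HilbertSchmidt

section PiKronecker

variable {ι d R : Type*} [Fintype ι]

def piKron [CommMonoid R] (f : ι → Matrix d d R) : Matrix (ι → d) (ι → d) R :=
  of fun x y => ∏ k, f k (x k) (y k)

theorem piKron_one [DecidableEq d] [CommSemiring R] : piKron (1 : ι → Matrix d d R) = 1 := by
  ext x y
  simp only [piKron, of_apply, Pi.one_apply, one_apply, Finset.prod_ite_zero,
    Finset.prod_const_one, Finset.mem_univ, true_implies, funext_iff]

theorem conjTranspose_piKron [CommSemiring R] [StarRing R] (f : ι → Matrix d d R) :
    (piKron f)ᴴ = piKron fun k => (f k)ᴴ := by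
  ext x y
  simp [piKron, star_prod]

variable [DecidableEq ι] [Fintype d]

theorem piKron_mul_piKron [CommSemiring R] (f g : ι → Matrix d d R) :
    piKron f * piKron g = piKron (f * g) := by
  ext x y
  simp only [piKron, mul_apply, of_apply, Pi.mul_apply, ← Finset.prod_mul_distrib]
  exact (Fintype.prod_sum fun k u => f k (x k) u * g k u (y k)).symm

theorem trace_piKron [CommSemiring R] (f : ι → Matrix d d R) :
    (piKron f).trace = ∏ k, (f k).trace := by
  simp only [trace, diag_apply, piKron, of_apply]
  exact (Fintype.prod_sum fun k s => f k s s).symm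

theorem inner_piKron [DecidableEq d] (f g : ι → Matrix d d ℂ) :
    inner ℂ (piKron f) (piKron g) = ∏ k, inner ℂ (f k) (g k) := by
  simp only [inner_eq_trace_div, conjTranspose_piKron, piKron_mul_piKron, trace_piKron,
    Pi.mul_apply, Finset.prod_div_distrib, Fintype.card_fun, Finset.prod_const, Finset.card_univ,
    Nat.cast_pow]

end PiKronecker

section TensorOn

variable {ι d R : Type*} [DecidableEq ι] [DecidableEq d]

/-- `tensorOn O s = ⊗_{k ∈ s} O k ⊗ I`; the operator `O⁽ⁱ⁾ ⊗ I^{[n]∖{i}}` is `tensorOn O {i}`. -/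
def tensorOn [Fintype ι] [CommSemiring R] (O : ι → Matrix d d R) (s : Finset ι) :
    Matrix (ι → d) (ι → d) R :=
  piKron (s.piecewise O 1)

theorem inner_piecewise_one [Fintype d] [Nonempty d] {O : ι → Matrix d d ℂ}
    (htr : ∀ k, (O k).trace = 0) (hnorm : ∀ k, inner ℂ (O k) (O k) = 1) (s t : Finset ι)
    (k : ι) :
    inner ℂ (s.piecewise O 1 k) (t.piecewise O 1 k) = if (k ∈ s ↔ k ∈ t) then 1 else 0 := by
  by_cases hs : k ∈ s <;> by_cases ht : k ∈ t <;>
    simp only [hs, ht, Finset.piecewise_eq_of_mem, Finset.piecewise_eq_of_notMem, Pi.one_apply,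
      iff_self, iff_false, false_iff, not_true, not_false_eq_true, if_true, if_false]
  · exact hnorm k
  · simp [inner_eq_trace_div, htr]
  · simp [inner_eq_trace_div, htr]
  · exact inner_one_one

variable [Fintype ι]

section CommSemiring

variable [CommSemiring R] (O : ι → Matrix d d R)

theorem tensorOn_empty : tensorOn O ∅ = 1 := by
  rw [tensorOn, Finset.piecewise_empty, piKron_one]

theorem tensorOn_singleton (i : ι) : tensorOn O {i} = piKron (Pi.mulSingle i (O i)) := by
  rw [tensorOn, Finset.piecewise_singleton]
  rfl

theorem tensorOn_mul_tensorOn [Fintype d] {s t : Finset ι} (h : Disjoint s t) :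
    tensorOn O s * tensorOn O t = tensorOn O (s ∪ t) := by
  rw [tensorOn, tensorOn, tensorOn, piKron_mul_piKron]
  congr 1
  ext1 k
  by_cases hs : k ∈ s
  · simp [hs, Finset.disjoint_left.mp h hs]
  · by_cases ht : k ∈ t <;> simp [hs, ht]

end CommSemiring

variable {O : ι → Matrix d d ℂ}

theorem isHermitian_tensorOn (hO : ∀ k, (O k).IsHermitian) (s : Finset ι) :
    (tensorOn O s).IsHermitian := by
  rw [IsHermitian, tensorOn, conjTranspose_piKron]
  congr 1
  ext1 k
  by_cases hk : k ∈ s <;> simp [hk, (hO k).eq]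

variable [Fintype d]

theorem inner_tensorOn_piKron_eq_zero {s : Finset ι} {f : ι → Matrix d d ℂ} {k : ι} (hk : k ∈ s)
    (hfk : f k = 1) (htr : (O k).trace = 0) : inner ℂ (tensorOn O s) (piKron f) = 0 := by
  rw [tensorOn, inner_piKron]
  refine Finset.prod_eq_zero (Finset.mem_univ k) ?_
  simp [hk, hfk, inner_eq_trace_div, htr]

theorem orthonormal_tensorOn [Nonempty d] (htr : ∀ k, (O k).trace = 0)
    (hnorm : ∀ k, inner ℂ (O k) (O k) = 1) : Orthonormal ℂ (tensorOn O) := by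
  refine orthonormal_iff_ite.mpr fun s t => ?_
  simp only [tensorOn, inner_piKron, inner_piecewise_one htr hnorm, Finset.prod_ite_zero,
    Finset.prod_const_one, Finset.mem_univ, true_implies, ← Finset.ext_iff]

end TensorOn

section SingleSiteSum

variable {ι d : Type*} [Fintype ι] [DecidableEq ι] [Fintype d] [DecidableEq d] [Nonempty d]
  {O : ι → Matrix d d ℂ}

theorem inner_one_tensorOn_mul_tensorOn (hherm : ∀ k, (O k).IsHermitian)
    (htr : ∀ k, (O k).trace = 0) (hnorm : ∀ k, inner ℂ (O k) (O k) = 1) (i j : ι) :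
    inner ℂ 1 (tensorOn O {i} * tensorOn O {j}) = if i = j then 1 else 0 := by
  rw [inner_one_mul, (isHermitian_tensorOn hherm _).eq,
    orthonormal_iff_ite.mp (orthonormal_tensorOn htr hnorm)]
  simp only [Finset.singleton_inj]

theorem inner_tensorOn_tensorOn_mul_tensorOn (htr : ∀ k, (O k).trace = 0)
    (hnorm : ∀ k, inner ℂ (O k) (O k) = 1) {s : Finset ι} (hs : s.card = 2) (i j : ι) :
    inner ℂ (tensorOn O s) (tensorOn O {i} * tensorOn O {j}) =
      if i ≠ j ∧ s = {i, j} then 1 else 0 := by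
  by_cases hij : i = j
  · subst hij
    -- `E_i²` is the identity off site `i`, and `s` contains a site `k ≠ i`.
    obtain ⟨k, hks, hki⟩ := Finset.exists_mem_ne (by omega : 1 < s.card) i
    rw [if_neg (fun h => h.1 rfl), tensorOn_singleton, piKron_mul_piKron, ← Pi.mulSingle_mul]
    exact inner_tensorOn_piKron_eq_zero hks (Pi.mulSingle_eq_of_ne hki _) (htr k)
  · rw [tensorOn_mul_tensorOn _ (Finset.disjoint_singleton.mpr hij), ← Finset.insert_eq,
      orthonormal_iff_ite.mp (orthonormal_tensorOn htr hnorm)]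
    simp only [ne_eq, hij, not_false_eq_true, true_and]

variable (a : ι → ℝ) {A : Matrix (ι → d) (ι → d) ℂ} (hA : A = ∑ i, (a i : ℂ) • tensorOn O {i})
include hA

theorem inner_one_mul_self_sub_one (hherm : ∀ k, (O k).IsHermitian)
    (htr : ∀ k, (O k).trace = 0) (hnorm : ∀ k, inner ℂ (O k) (O k) = 1) :
    inner ℂ 1 (A * A - 1) = ((∑ i, a i ^ 2 - 1 : ℝ) : ℂ) := by
  rw [inner_sub_right, inner_one_one, hA, inner_mul_self_sum_smul]
  simp only [inner_one_tensorOn_mul_tensorOn hherm htr hnorm, mul_ite, mul_one, mul_zero,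
    Finset.sum_ite_eq, Finset.mem_univ, if_true]
  push_cast
  ring_nf

theorem inner_tensorOn_mul_self_sub_one (htr : ∀ k, (O k).trace = 0)
    (hnorm : ∀ k, inner ℂ (O k) (O k) = 1) {s : Finset ι} (hs : s.card = 2) :
    inner ℂ (tensorOn O s) (A * A - 1) =
      ((∑ p ∈ Finset.univ.offDiag with {p.1, p.2} = s, a p.1 * a p.2 : ℝ) : ℂ) := by
  have hs0 : s ≠ ∅ := by rintro rfl; simp at hs
  rw [inner_sub_right, ← tensorOn_empty O, orthonormal_iff_ite.mp (orthonormal_tensorOn htr hnorm),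
    if_neg hs0, sub_zero, hA, inner_mul_self_sum_smul]
  simp only [inner_tensorOn_tensorOn_mul_tensorOn htr hnorm hs, mul_ite, mul_one, mul_zero]
  rw [← Fintype.sum_prod_type' (f := fun i j => if i ≠ j ∧ s = {i, j} then (a i : ℂ) * a j else 0),
    ← Finset.sum_filter, Complex.ofReal_sum]
  push_cast
  congr 1
  ext p
  simp [Finset.mem_offDiag, eq_comm]

theorem sq_sum_sq_sub_one_add_sum_offDiag_le (ha : ∀ i, 0 ≤ a i) (hherm : ∀ k, (O k).IsHermitian)
    (htr : ∀ k, (O k).trace = 0) (hnorm : ∀ k, inner ℂ (O k) (O k) = 1) :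
    (∑ i, a i ^ 2 - 1) ^ 2 + ∑ p ∈ Finset.univ.offDiag, (a p.1 * a p.2) ^ 2 ≤
      ‖A * A - 1‖ ^ 2 := by
  have hbessel := (orthonormal_tensorOn htr hnorm).sum_inner_products_le (A * A - 1)
    (s := insert ∅ (Finset.univ.powersetCard 2))
  rw [Finset.sum_insert (by simp), tensorOn_empty, inner_one_mul_self_sub_one a hA hherm htr hnorm,
    Complex.norm_real, Real.norm_eq_abs, sq_abs] at hbessel
  have hpairs : ∑ p ∈ Finset.univ.offDiag, (a p.1 * a p.2) ^ 2 ≤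
      ∑ s ∈ Finset.univ.powersetCard 2, ‖inner ℂ (tensorOn O s) (A * A - 1)‖ ^ 2 := by
    calc _ ≤ ∑ s ∈ Finset.univ.powersetCard 2,
          (∑ p ∈ Finset.univ.offDiag with {p.1, p.2} = s, a p.1 * a p.2) ^ 2 :=
        Finset.sum_sq_le_sum_sq_sum_fiberwise
          (fun p hp => Finset.mem_powersetCard.mpr ⟨Finset.subset_univ _,
            Finset.card_pair (Finset.mem_offDiag.mp hp).2.2⟩)
          (fun p _ => mul_nonneg (ha _) (ha _))
      _ = _ := Finset.sum_congr rfl fun s hs => by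
        rw [inner_tensorOn_mul_self_sub_one a hA htr hnorm (Finset.mem_powersetCard.mp hs).2,
          Complex.norm_real, Real.norm_eq_abs, sq_abs]
  linarith

end SingleSiteSum

end Matrix

theorem embedAt_eq_piKron {n : ℕ} (i : Fin n) (O : Matrix (Fin 4) (Fin 4) ℂ) :
    embedAt i O = piKron (Pi.mulSingle i O) := by
  ext x y
  rw [embedAt, piKron, of_apply, ← Finset.mul_prod_erase _ _ (Finset.mem_univ i),
    Pi.mulSingle_eq_same]
  by_cases h : ∀ j, j ≠ i → x j = y j
  · rw [if_pos h, Finset.prod_eq_one, mul_one]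
    intro k hk
    have hki := Finset.ne_of_mem_erase hk
    rw [Pi.mulSingle_eq_of_ne hki, h k hki, one_apply_eq]
  · push Not at h
    obtain ⟨j, hji, hxy⟩ := h
    rw [if_neg (fun h => hxy (h j hji)),
      Finset.prod_eq_zero (Finset.mem_erase.mpr ⟨hji, Finset.mem_univ j⟩), mul_zero]
    rw [Pi.mulSingle_eq_of_ne hji, one_apply_ne hxy]

theorem stmt15 :
    ∃ Cst : ℝ, 0 < Cst ∧
      ∀ (n : ℕ) (_ : 0 < n) (ε : ℝ) (_ : 0 ≤ ε) (a : Fin n → ℝ)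
        (O : Fin n → Matrix (Fin 4) (Fin 4) ℂ)
        (A : Matrix (Fin n → Fin 4) (Fin n → Fin 4) ℂ),
        (∀ i, 0 ≤ a i) →
        (∀ i, (O i).IsHermitian) →
        (∀ i, (O i).trace = 0) →
        (∀ i, ((O i)ᴴ * O i).trace / 4 = 1) →
        A = ∑ i, (a i : ℂ) • embedAt i (O i) →
        frobNorm (A * A - 1) / Real.sqrt ((4 : ℝ) ^ n) ≤ ε →
        ∃ ℓ : Fin n,
          frobNorm (A - embedAt ℓ (O ℓ)) / Real.sqrt ((4 : ℝ) ^ n) ≤ Cst * ε ∧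
          |a ℓ - 1| ≤ Cst * ε ∧
          ∑ j ∈ Finset.univ.erase ℓ, (a j) ^ 2 ≤ Cst * ε ^ 2 := by
  refine ⟨6, by norm_num, fun n hn ε hε a O A ha hherm htr hnorm hA hclose => ?_⟩
  have : Nonempty (Fin n) := ⟨⟨0, hn⟩⟩
  have hnorm' : ∀ i, inner ℂ (O i) (O i) = 1 := fun i => by
    rw [inner_eq_trace_div, Fintype.card_fin, Nat.cast_ofNat, hnorm i]
  have hE : ∀ i, embedAt i (O i) = tensorOn O {i} := fun i => by
    rw [embedAt_eq_piKron, tensorOn_singleton]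
  have hA' : A = ∑ i, (a i : ℂ) • tensorOn O {i} := by simp only [hA, hE]
  have hnormalize : ∀ X : Matrix (Fin n → Fin 4) (Fin n → Fin 4) ℂ,
      frobNorm X / Real.sqrt ((4 : ℝ) ^ n) = ‖X‖ := fun X => by
    rw [norm_eq_frobNorm_div, Fintype.card_fun, Fintype.card_fin, Fintype.card_fin, Nat.cast_pow,
      Nat.cast_ofNat]
  rw [hnormalize] at hclose
  have hbessel := (sq_sum_sq_sub_one_add_sum_offDiag_le a hA' ha hherm htr hnorm').trans
    (pow_le_pow_left₀ (norm_nonneg _) hclose 2)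
  simp only [mul_pow] at hbessel
  obtain ⟨ℓ, hℓ, hT⟩ := exists_abs_sub_one_le_sum_erase_le (x := fun i => a i ^ 2)
    (fun i => sq_nonneg (a i)) hε hbessel
  have haℓ : |a ℓ - 1| ≤ 2 * ε := (abs_sub_one_le_abs_sq_sub_one (ha ℓ)).trans hℓ
  refine ⟨ℓ, ?_, by linarith, by linarith⟩
  have hpyth := ((orthonormal_tensorOn htr hnorm').comp _
    Finset.singleton_injective).norm_sum_ofReal_smul_sub_sq a ℓ
  rw [hnormalize, hA', hE, ← pow_le_pow_iff_left₀ (norm_nonneg _) (by positivity) two_ne_zero]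
  refine hpyth.trans_le ?_
  nlinarith [abs_le.mp haℓ]
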